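/- arXiv:2506.07380 — 5 statements merged into one kernel-verified Lean document; each statement's English description precedes it below -/
import Mathlib

section
/- Let A, B, C be linear codes of length n over F_q such that A * B ⊆ C^⊥, d(A^⊥) > a > 0 and d(B^⊥) > b > 0. Then d(C) ≥ a + b. -/
open Finset

/-- Hamming weight of a vector. -/
noncomputable def wt {F : Type*} [Zero F] {ι : Type*} (c : ι → F) : ℕ :=
  Nat.card {i : ι // c i ≠ 0}

/-- `C` has minimum Hamming distance `d`. -/
def hasMinDist {F : Type*} [Field F] {ι : Type*} (C : Submodule F (ι → F)) (d : ℕ) : Prop :=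
  (∃ c ∈ C, c ≠ 0 ∧ wt c = d) ∧ ∀ c ∈ C, c ≠ 0 → d ≤ wt c

/-- The dual code with respect to the standard inner product. -/
def dualCode {F : Type*} [Field F] {ι : Type*} [Fintype ι] (C : Submodule F (ι → F)) :
    Submodule F (ι → F) where
  carrier := {x | ∀ c ∈ C, ∑ i, x i * c i = 0}
  add_mem' := by
    intro a b ha hb c hc
    simp only [Pi.add_apply, add_mul, Finset.sum_add_distrib, ha c hc, hb c hc, add_zero]
  zero_mem' := by intro c hc; simp
  smul_mem' := by
    intro r a ha c hc
    simp only [Pi.smul_apply, smul_eq_mul, mul_assoc, ← Finset.mul_sum, ha c hc, mul_zero]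

/-- The Schur (coordinatewise) product code: the span of all coordinatewise products. -/
def schurProd {F : Type*} [Field F] {ι : Type*} (A B : Submodule F (ι → F)) :
    Submodule F (ι → F) :=
  Submodule.span F {x | ∃ a ∈ A, ∃ b ∈ B, x = a * b}

/-- A code is full-support if every coordinate carries a nonzero entry of some codeword. -/
def fullSupport {F : Type*} [Field F] {ι : Type*} (A : Submodule F (ι → F)) : Prop :=
  ∀ i : ι, ∃ a ∈ A, a i ≠ 0

/-- Extension of scalars of a code from `Fq` to an extension field `K`, componentwise. -/
def extendCode (Fq K : Type*) [Field Fq] [Field K] [Algebra Fq K] {ι : Type*}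
    (C : Submodule Fq (ι → Fq)) : Submodule K (ι → K) :=
  Submodule.span K ((fun c (i : ι) => algebraMap Fq K (c i)) '' (C : Set (ι → Fq)))

/-!
Let `c ∈ C` be nonzero of weight `< a + b` and `i` a coordinate of its support. The support is
covered by a set `S` of size `≤ a` and a set `T` of size `≤ b`, both containing `i`. Because every
nonzero word of `A^⊥` has weight `> a`, the code `A` takes every prescribed set of values on `S`:
otherwise a nonzero functional vanishing on `A` and on all words that vanish on `S` would be a word
of `A^⊥` supported in `S`. So some `u ∈ A` and `v ∈ B` are the indicator of `i` on `S` and on `T`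
respectively, and then `⟨u * v, c⟩ = c i ≠ 0`, contradicting `u * v ∈ C^⊥`.
-/

lemma wt_eq_card {R ι : Type*} [Zero R] [DecidableEq R] [Fintype ι] (c : ι → R) :
    wt c = #{i | c i ≠ 0} := by
  rw [wt, Nat.card_eq_fintype_card, Fintype.card_subtype]

lemma LinearMap.apply_eq_sum_mul_apply_single {R ι : Type*} [CommSemiring R] [Fintype ι]
    [DecidableEq ι] (g : Module.Dual R (ι → R)) (x : ι → R) :
    g x = ∑ i, g (Pi.single i 1) * x i := by
  conv_lhs => rw [← Finset.univ_sum_single x]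
  simp only [map_sum]
  refine Finset.sum_congr rfl fun i _ => ?_
  rw [mul_comm, ← smul_eq_mul, ← map_smul, ← Pi.single_smul', smul_eq_mul, mul_one]

theorem exists_mem_eqOn_of_card_le_of_lt_wt_dualCode {F ι : Type*} [Field F] [Fintype ι]
    {A : Submodule F (ι → F)} {k : ℕ}
    (hA : ∀ y ∈ dualCode A, y ≠ 0 → k < wt y) {S : Finset ι} (hS : #S ≤ k) (t : ι → F) :
    ∃ u ∈ A, Set.EqOn u t S := by
  classical
  have htop : A ⊔ Submodule.pi (S : Set ι) (fun _ => ⊥) = ⊤ := by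
    by_contra hne
    obtain ⟨g, hg0, hg⟩ := Submodule.exists_dual_map_eq_bot_of_lt_top (lt_top_iff_ne_top.2 hne)
      inferInstance
    have hgW : ∀ x ∈ A ⊔ Submodule.pi (S : Set ι) (fun _ => ⊥), g x = 0 := fun x hx =>
      (Submodule.mem_bot F).1 (hg ▸ Submodule.mem_map_of_mem hx)
    set y : ι → F := fun i => g (Pi.single i 1)
    have hyA : y ∈ dualCode A := fun c hc => by
      rw [← g.apply_eq_sum_mul_apply_single]; exact hgW c (Submodule.mem_sup_left hc)
    have hy0 : y ≠ 0 := fun h => hg0 (LinearMap.ext fun x => by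
      rw [g.apply_eq_sum_mul_apply_single]; simp [show ∀ i, g (Pi.single i 1) = 0 from congrFun h])
    have hyS : wt y ≤ #S := by
      rw [wt_eq_card]
      refine card_le_card fun i hi => ?_
      by_contra hiS
      refine (mem_filter.1 hi).2 (hgW _ (Submodule.mem_sup_right ?_))
      exact Submodule.mem_pi.2 fun j hj =>
        (Submodule.mem_bot F).2 (Pi.single_eq_of_ne (ne_of_mem_of_not_mem hj hiS) _)
    exact (hA y hyA hy0).not_ge (hyS.trans hS)
  obtain ⟨u, hu, w, hw, rfl⟩ := Submodule.mem_sup.1 (htop ▸ Submodule.mem_top : t ∈ _)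
  refine ⟨u, hu, fun i hi => ?_⟩
  rw [Pi.add_apply, (Submodule.mem_bot F).1 (Submodule.mem_pi.1 hw i hi), add_zero]

lemma exists_cover_of_card_lt_add {ι : Type*} [DecidableEq ι] {s : Finset ι} {i : ι} {a b : ℕ}
    (hi : i ∈ s) (ha : 0 < a) (hb : 0 < b) (hs : #s < a + b) :
    ∃ S T : Finset ι, i ∈ S ∧ i ∈ T ∧ s ⊆ S ∪ T ∧ #S ≤ a ∧ #T ≤ b := by
  obtain ⟨S, hiS, hSs, hScard⟩ := exists_subsuperset_card_eq (singleton_subset_iff.2 hi)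
    (by rw [card_singleton]; exact le_min ha (card_pos.2 ⟨i, hi⟩)) (min_le_right a #s)
  refine ⟨S, insert i (s \ S), singleton_subset_iff.1 hiS, mem_insert_self _ _,
    fun j hj => ?_, hScard ▸ min_le_left _ _, ?_⟩
  · by_cases hjS : j ∈ S
    · exact mem_union_left _ hjS
    · exact mem_union_right _ (mem_insert_of_mem (mem_sdiff.2 ⟨hj, hjS⟩))
  · have := card_sdiff_of_subset hSs
    have := card_insert_le i (s \ S)
    omega

lemma sum_mul_mul_eq_of_eqOn_single {R ι : Type*} [NonAssocSemiring R] [Fintype ι] [DecidableEq ι]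
    {u v c : ι → R} {S T : Finset ι} {i : ι} (hiS : i ∈ S) (hiT : i ∈ T)
    (hc : ∀ j, c j ≠ 0 → j ∈ S ∪ T)
    (hu : Set.EqOn u (Pi.single i 1) S) (hv : Set.EqOn v (Pi.single i 1) T) :
    ∑ j, (u * v) j * c j = c i := by
  rw [sum_eq_single i (fun j _ hji => ?_) (by simp), Pi.mul_apply, hu hiS, hv hiT]
  · simp
  by_cases hcj : c j = 0
  · rw [hcj, mul_zero]
  rcases mem_union.1 (hc j hcj) with hjS | hjT
  · rw [Pi.mul_apply, hu hjS, Pi.single_eq_of_ne hji, zero_mul, zero_mul]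
  · rw [Pi.mul_apply, hv hjT, Pi.single_eq_of_ne hji, mul_zero, zero_mul]

theorem dist_lower_bound_of_schur_general {F : Type*} [Field F] {n a b dA dB dC : ℕ}
    (A B C : Submodule F (Fin n → F))
    (hAB : schurProd A B ≤ dualCode C)
    (hA : hasMinDist (dualCode A) dA) (ha : a < dA) (ha0 : 0 < a)
    (hB : hasMinDist (dualCode B) dB) (hb : b < dB) (hb0 : 0 < b)
    (hC : hasMinDist C dC) :
    a + b ≤ dC := by
  classical
  obtain ⟨⟨c, hcC, hc0, rfl⟩, -⟩ := hC
  by_contra! hlt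
  obtain ⟨i, hi⟩ : ∃ i, c i ≠ 0 := Function.ne_iff.1 hc0
  obtain ⟨S, T, hiS, hiT, hcover, hS, hT⟩ := exists_cover_of_card_lt_add
    (s := {j | c j ≠ 0}) (mem_filter.2 ⟨mem_univ i, hi⟩) ha0 hb0 (wt_eq_card c ▸ hlt)
  obtain ⟨u, huA, hu⟩ := exists_mem_eqOn_of_card_le_of_lt_wt_dualCode
    (fun y hy hy0 => ha.trans_le (hA.2 y hy hy0)) hS (Pi.single i 1)
  obtain ⟨v, hvB, hv⟩ := exists_mem_eqOn_of_card_le_of_lt_wt_dualCode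
    (fun y hy hy0 => hb.trans_le (hB.2 y hy hy0)) hT (Pi.single i 1)
  have huv : u * v ∈ dualCode C := hAB (Submodule.subset_span ⟨u, huA, v, hvB, rfl⟩)
  refine hi ?_
  rw [← huv c hcC, sum_mul_mul_eq_of_eqOn_single hiS hiT
    (fun j hj => hcover (mem_filter.2 ⟨mem_univ j, hj⟩)) hu hv]

/-- if `A * B ⊆ C^⊥`, `d(A^⊥) > a > 0` and `d(B^⊥) > b > 0`, then `d(C) ≥ a + b`. -/
theorem dist_lower_bound_of_schur {F : Type*} [Field F] [Fintype F] {n a b dA dB dC : ℕ}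
    (A B C : Submodule F (Fin n → F))
    (hAB : schurProd A B ≤ dualCode C)
    (hA : hasMinDist (dualCode A) dA) (ha : a < dA) (ha0 : 0 < a)
    (hB : hasMinDist (dualCode B) dB) (hb : b < dB) (hb0 : 0 < b)
    (hC : hasMinDist C dC) :
    a + b ≤ dC :=
  dist_lower_bound_of_schur_general A B C hAB hA ha ha0 hB hb hb0 hC
end

section
/- (Product Singleton Bound) For any linear codes A and B of length n over F_q, the minimum distance of the Schur product code satisfies d(A * B) ≤ max{1, n - (dim A + dim B) + 2}. -/
open Finset

/-!
Let `I` be an information set of `B`: a minimal set of coordinates on which no nonzero word of `B`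
vanishes. Then `dim B ≤ |I|`, and each `i ∈ I` carries a word of `B` that vanishes on `I \ {i}`.
Let `S ⊇ I` be the support of `B`, and take a maximal `Z ⊆ S \ I` on which some `a ∈ A` with
`a * B ≠ 0` vanishes. Multiplying `a` by a suitable word of `B` gives a nonzero product supported
in `{i} ∪ (S \ I \ Z)`. By maximality, every word of `A` that vanishes on `Z ∪ {j}` for some
`j ∈ S \ I \ Z` vanishes on all of `S`, so `dim A ≤ (n - |S|) + |Z| + 1`. Together with
`dim B ≤ |I|` this bounds the weight of the product by `n - dim A - dim B + 2`, unless
`Z = S \ I`, in which case the weight is at most `1`.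
-/

open Module

section

variable {F : Type*} [Field F] {ι : Type*}

def vanishingOn (Z : Finset ι) : Submodule F (ι → F) :=
  LinearMap.ker (LinearMap.funLeft F F ((↑) : Z → ι))

lemma mem_vanishingOn {Z : Finset ι} {x : ι → F} : x ∈ vanishingOn Z ↔ ∀ j ∈ Z, x j = 0 := by
  simp [vanishingOn, funext_iff, LinearMap.funLeft]

lemma mul_mem_schurProd {A B : Submodule F (ι → F)} {a b : ι → F} (ha : a ∈ A) (hb : b ∈ B) :
    a * b ∈ schurProd A B :=
  Submodule.subset_span ⟨a, ha, b, hb, rfl⟩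

lemma exists_mul_ne_zero_of_mem_schurProd {A B : Submodule F (ι → F)} {c : ι → F}
    (hc : c ∈ schurProd A B) (hc0 : c ≠ 0) : ∃ a ∈ A, ∃ b ∈ B, a * b ≠ 0 := by
  by_contra! h
  have hbot : schurProd A B = ⊥ := Submodule.span_eq_bot.mpr fun x ⟨a, ha, b, hb, hx⟩ =>
    hx ▸ h a ha b hb
  exact hc0 ((Submodule.mem_bot F).mp (hbot ▸ hc))

lemma exists_maximal_inf_vanishingOn_not_le [DecidableEq ι] {A V : Submodule F (ι → F)}
    (R : Finset ι) (h : ¬ A ≤ V) :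
    ∃ Z ⊆ R, ¬ A ⊓ vanishingOn Z ≤ V ∧ ∀ j ∈ R \ Z, A ⊓ vanishingOn (insert j Z) ≤ V := by
  classical
  have hempty : A ⊓ vanishingOn (∅ : Finset ι) = A :=
    inf_eq_left.mpr fun x _ => mem_vanishingOn.mpr fun j hj => absurd hj (notMem_empty j)
  obtain ⟨Z, hZ, hmax⟩ := Finset.exists_maximal
    (s := R.powerset.filter fun Z => ¬ A ⊓ vanishingOn Z ≤ V) ⟨∅, by simpa [hempty] using h⟩
  simp only [mem_filter, mem_powerset] at hZ hmax
  refine ⟨Z, hZ.1, hZ.2, fun j hj => ?_⟩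
  obtain ⟨hjR, hjZ⟩ := mem_sdiff.mp hj
  by_contra hle
  exact hjZ (hmax ⟨insert_subset hjR hZ.1, hle⟩ (subset_insert j Z) (mem_insert_self j Z))

lemma exists_mul_mem_vanishingOn_erase [DecidableEq ι] {B : Submodule F (ι → F)} {I : Finset ι}
    (hI : ∀ i ∈ I, ∃ b ∈ B ⊓ vanishingOn (I.erase i), b i ≠ 0)
    {a b₀ : ι → F} (hb₀ : b₀ ∈ B) (hab₀ : a * b₀ ≠ 0) :
    ∃ b ∈ B, ∃ i, a * b ∈ vanishingOn (I.erase i) ∧ (a * b) i ≠ 0 := by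
  by_cases haI : ∃ i ∈ I, a i ≠ 0
  · obtain ⟨i, hi, hai⟩ := haI
    obtain ⟨b, ⟨hb, hbI⟩, hbi⟩ := hI i hi
    refine ⟨b, hb, i, mem_vanishingOn.mpr fun j hj => ?_, mul_ne_zero hai hbi⟩
    simp [mem_vanishingOn.mp hbI j hj]
  · push Not at haI
    obtain ⟨i, hi⟩ := Function.ne_iff.mp hab₀
    refine ⟨b₀, hb₀, i, mem_vanishingOn.mpr fun j hj => ?_, hi⟩
    simp [haI j (mem_of_mem_erase hj)]

variable [Fintype ι]

lemma wt_le_card_of_forall_ne_zero_mem {c : ι → F} {T : Finset ι} (h : ∀ j, c j ≠ 0 → j ∈ T) :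
    wt c ≤ T.card :=
  calc wt c ≤ Nat.card T :=
        Nat.card_le_card_of_injective (fun j => ⟨j.1, h j.1 j.2⟩) fun j j' hj => by
          simpa [Subtype.ext_iff] using hj
    _ = T.card := by simp

lemma finrank_le_finrank_inf_vanishingOn_add_card (C : Submodule F (ι → F)) (Z : Finset ι) :
    finrank F C ≤ finrank F ↥(C ⊓ vanishingOn Z) + Z.card := by
  have hsup := Submodule.finrank_sup_add_finrank_inf_eq C (vanishingOn Z)
  have hsup_le := Submodule.finrank_le (C ⊔ vanishingOn Z)
  have hrank := (LinearMap.funLeft F F ((↑) : Z → ι)).finrank_range_add_finrank_ker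
  have hrange_le := Submodule.finrank_le (LinearMap.funLeft F F ((↑) : Z → ι)).range
  simp only [finrank_fintype_fun_eq_card, Fintype.card_coe] at hsup_le hrank hrange_le
  unfold vanishingOn at *
  omega

lemma finrank_le_card_of_inf_vanishingOn_eq_bot {C : Submodule F (ι → F)} {Z : Finset ι}
    (h : C ⊓ vanishingOn Z = ⊥) : finrank F C ≤ Z.card := by
  have := finrank_le_finrank_inf_vanishingOn_add_card C Z
  rwa [h, finrank_bot, zero_add] at this

lemma finrank_add_card_le_of_inf_vanishingOn_le {A : Submodule F (ι → F)} {Y S : Finset ι}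
    (h : A ⊓ vanishingOn Y ≤ vanishingOn S) : finrank F A + S.card ≤ Fintype.card ι + Y.card := by
  classical
  have hdisj : A ⊓ vanishingOn Y ⊓ vanishingOn Sᶜ = (⊥ : Submodule F (ι → F)) := by
    refine eq_bot_iff.mpr fun x hx => funext fun j => ?_
    by_cases hj : j ∈ S
    · exact mem_vanishingOn.mp (h hx.1) j hj
    · exact mem_vanishingOn.mp hx.2 j (mem_compl.mpr hj)
  have := finrank_le_finrank_inf_vanishingOn_add_card A Y
  have := finrank_le_card_of_inf_vanishingOn_eq_bot hdisj
  have := card_compl_add_card S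
  omega

lemma exists_informationSet [DecidableEq ι] (B : Submodule F (ι → F)) :
    ∃ I : Finset ι, B ⊓ vanishingOn I = ⊥ ∧
      ∀ i ∈ I, ∃ b ∈ B ⊓ vanishingOn (I.erase i), b i ≠ 0 := by
  classical
  have huniv : B ⊓ vanishingOn univ = ⊥ := eq_bot_iff.mpr fun x hx =>
    funext fun j => mem_vanishingOn.mp hx.2 j (mem_univ j)
  obtain ⟨I, hI, hmin⟩ := Finset.exists_minimal
    (s := univ.filter fun I : Finset ι => B ⊓ vanishingOn I = ⊥) ⟨univ, by simpa using huniv⟩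
  simp only [mem_filter, mem_univ, true_and] at hI hmin
  refine ⟨I, hI, fun i hi => ?_⟩
  have hne : B ⊓ vanishingOn (I.erase i) ≠ ⊥ := fun h =>
    notMem_erase i I (hmin h (erase_subset i I) hi)
  obtain ⟨b, hb, hb0⟩ := (Submodule.ne_bot_iff _).mp hne
  refine ⟨b, hb, fun hbi => hb0 ?_⟩
  have hbI : b ∈ B ⊓ vanishingOn I := ⟨hb.1, mem_vanishingOn.mpr fun j hj => by
    by_cases hji : j = i
    · rwa [hji]
    · exact mem_vanishingOn.mp hb.2 j (mem_erase.mpr ⟨hji, hj⟩)⟩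
  simpa [hI] using hbI

open Classical in
noncomputable def codeSupport (B : Submodule F (ι → F)) : Finset ι :=
  univ.filter fun j => ∃ b ∈ B, b j ≠ 0

lemma mem_codeSupport {B : Submodule F (ι → F)} {j : ι} :
    j ∈ codeSupport B ↔ ∃ b ∈ B, b j ≠ 0 := by
  simp [codeSupport]

lemma not_le_vanishingOn_codeSupport {A B : Submodule F (ι → F)} {a₀ b₀ : ι → F}
    (ha₀ : a₀ ∈ A) (hb₀ : b₀ ∈ B) (hab₀ : a₀ * b₀ ≠ 0) :
    ¬ A ≤ vanishingOn (codeSupport B) := fun hle => hab₀ <| funext fun j => by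
  by_cases hj : j ∈ codeSupport B
  · simp [mem_vanishingOn.mp (hle ha₀) j hj]
  · have hb₀j : b₀ j = 0 := by
      by_contra hne
      exact hj (mem_codeSupport.mpr ⟨b₀, hb₀, hne⟩)
    simp [hb₀j]

lemma wt_mul_le_card_insert [DecidableEq ι] {B : Submodule F (ι → F)} {I Z : Finset ι}
    {a b : ι → F} {i : ι} (ha : a ∈ vanishingOn Z) (hb : b ∈ B)
    (hab : a * b ∈ vanishingOn (I.erase i)) :
    wt (a * b) ≤ (insert i ((codeSupport B \ I) \ Z)).card := by
  refine wt_le_card_of_forall_ne_zero_mem fun k hk => ?_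
  rw [mem_insert, mem_sdiff, mem_sdiff]
  by_cases hki : k = i
  · exact Or.inl hki
  refine Or.inr ⟨⟨?_, fun hkI => hk ?_⟩, fun hkZ => ?_⟩
  · exact mem_codeSupport.mpr ⟨b, hb, right_ne_zero_of_mul hk⟩
  · exact mem_vanishingOn.mp hab k (mem_erase.mpr ⟨hki, hkI⟩)
  · exact left_ne_zero_of_mul hk (mem_vanishingOn.mp ha k hkZ)

theorem exists_mul_ne_zero_wt_le (A B : Submodule F (ι → F)) {a₀ b₀ : ι → F} (ha₀ : a₀ ∈ A)
    (hb₀ : b₀ ∈ B) (hab₀ : a₀ * b₀ ≠ 0) :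
    ∃ a ∈ A, ∃ b ∈ B, a * b ≠ 0 ∧
      (wt (a * b) ≤ 1 ∨ wt (a * b) + finrank F A + finrank F B ≤ Fintype.card ι + 2) := by
  classical
  obtain ⟨I, hIB, hI⟩ := exists_informationSet B
  have hIS : I ⊆ codeSupport B := fun i hi =>
    let ⟨b, hb, hbi⟩ := hI i hi
    mem_codeSupport.mpr ⟨b, hb.1, hbi⟩
  set R := codeSupport B \ I
  obtain ⟨Z, hZR, hZ, hZmax⟩ :=
    exists_maximal_inf_vanishingOn_not_le R (not_le_vanishingOn_codeSupport ha₀ hb₀ hab₀)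
  obtain ⟨a, ⟨haA, haZ⟩, haS⟩ := SetLike.not_le_iff_exists.mp hZ
  obtain ⟨j, hjS, haj⟩ : ∃ j ∈ codeSupport B, a j ≠ 0 := by
    by_contra! h
    exact haS (mem_vanishingOn.mpr h)
  obtain ⟨b₁, hb₁, hb₁j⟩ := mem_codeSupport.mp hjS
  obtain ⟨b, hb, i, hab_van, hab_i⟩ :=
    exists_mul_mem_vanishingOn_erase hI hb₁ (Function.ne_iff.mpr ⟨j, mul_ne_zero haj hb₁j⟩)
  have hwt : wt (a * b) ≤ (insert i (R \ Z)).card := wt_mul_le_card_insert haZ hb hab_van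
  refine ⟨a, haA, b, hb, fun h => hab_i (by rw [h, Pi.zero_apply]), ?_⟩
  rcases (R \ Z).eq_empty_or_nonempty with hRZ | ⟨k, hk⟩
  · exact Or.inl (by simpa [hRZ] using hwt)
  · have hins := card_insert_le i (R \ Z)
    have hA := finrank_add_card_le_of_inf_vanishingOn_le (hZmax k hk)
    have hB := finrank_le_card_of_inf_vanishingOn_eq_bot hIB
    have : (insert k Z).card = Z.card + 1 := card_insert_of_notMem (mem_sdiff.mp hk).2
    have : (R \ Z).card = R.card - Z.card := card_sdiff_of_subset hZR
    have : R.card = (codeSupport B).card - I.card := card_sdiff_of_subset hIS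
    omega

end

theorem product_singleton_bound_general {F : Type*} [Field F] {n d : ℕ}
    (A B : Submodule F (Fin n → F))
    (hd : hasMinDist (schurProd A B) d) :
    d ≤ max 1 (n - (Module.finrank F A + Module.finrank F B) + 2) := by
  obtain ⟨⟨c, hc, hc0, -⟩, hmin⟩ := hd
  obtain ⟨a₀, ha₀, b₀, hb₀, hab₀⟩ := exists_mul_ne_zero_of_mem_schurProd hc hc0
  obtain ⟨a, ha, b, hb, hab, hwt⟩ := exists_mul_ne_zero_wt_le A B ha₀ hb₀ hab₀
  have hd_le := hmin (a * b) (mul_mem_schurProd ha hb) hab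
  rw [Fintype.card_fin] at hwt
  omega

/-- Product Singleton Bound:
`d(A * B) ≤ max {1, n - (dim A + dim B) + 2}`. -/
theorem product_singleton_bound {F : Type*} [Field F] [Fintype F] {n d : ℕ}
    (A B : Submodule F (Fin n → F))
    (hd : hasMinDist (schurProd A B) d) :
    d ≤ max 1 (n - (Module.finrank F A + Module.finrank F B) + 2) :=
  product_singleton_bound_general A B hd
end

section
/- Let A and B be MDS linear codes in F_q^n with dim(A * B) = dim A + dim B - 1. Then A * B is an MDS code. -/
open Finset

/-!
A code `C` is MDS iff it is nonzero and no nonzero codeword vanishes on `dim C` coordinates.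
Let `a = dim A`, `b = dim B`, `k = a + b - 1 = dim (A * B)` and let `Z` be `k` coordinates.
For `i ∈ Z`, split `Z \ {i}` into `a - 1` and `b - 1` coordinates: since `A` and `B` are MDS
there are `u ∈ A` and `v ∈ B` vanishing there but not at `i`, so `u * v` restricts on `Z` to a
nonzero multiple of the unit vector at `i`. Hence restricting `A * B` to `Z` is onto, and so,
comparing dimensions, one-to-one: no nonzero element of `A * B` vanishes on `Z`.
-/

namespace Code

variable {F ι : Type*} [Field F]

def restrictCoords (C : Submodule F (ι → F)) (T : Finset ι) : C →ₗ[F] (T → F) :=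
  LinearMap.funLeft F F ((↑) : T → ι) ∘ₗ C.subtype

@[simp]
lemma restrictCoords_apply (C : Submodule F (ι → F)) (T : Finset ι) (c : C) (j : T) :
    restrictCoords C T c j = (c : ι → F) j :=
  rfl

lemma mul_mem_schurProd {A B : Submodule F (ι → F)} {a b : ι → F} (ha : a ∈ A) (hb : b ∈ B) :
    a * b ∈ schurProd A B :=
  Submodule.subset_span ⟨a, ha, b, hb, rfl⟩

/-- Every `dim C` coordinates form an information set; see `hasMinDist_iff_isMDS`. -/
def IsMDS (C : Submodule F (ι → F)) : Prop :=
  0 < Module.finrank F C ∧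
    ∀ c ∈ C, ∀ T : Finset ι, Module.finrank F C ≤ #T → (∀ j ∈ T, c j = 0) → c = 0

variable [Fintype ι]

lemma card_filter_eq_zero_add_wt [DecidableEq F] (c : ι → F) :
    #{i | c i = 0} + wt c = Fintype.card ι := by
  rw [wt, Nat.card_eq_fintype_card, Fintype.card_subtype, card_filter_add_card_filter_not,
    card_univ]

lemma wt_add_card_le {c : ι → F} {T : Finset ι} (hT : ∀ j ∈ T, c j = 0) :
    wt c + #T ≤ Fintype.card ι := by
  classical
  have hsub : T ⊆ ({i | c i = 0} : Finset ι) := fun j hj => mem_filter.mpr ⟨mem_univ j, hT j hj⟩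
  have := card_le_card hsub
  have := card_filter_eq_zero_add_wt c
  omega

lemma exists_card_eq_forall_eq_zero {c : ι → F} {m : ℕ} (h : wt c + m ≤ Fintype.card ι) :
    ∃ T : Finset ι, #T = m ∧ ∀ j ∈ T, c j = 0 := by
  classical
  obtain ⟨T, hsub, hT⟩ := exists_subset_card_eq (s := {i | c i = 0}) (n := m)
    (by have := card_filter_eq_zero_add_wt c; omega)
  exact ⟨T, hT, fun j hj => (mem_filter.mp (hsub hj)).2⟩

lemma finrank_le_card (C : Submodule F (ι → F)) : Module.finrank F C ≤ Fintype.card ι := by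
  simpa using Submodule.finrank_le C

/-- The Singleton bound. -/
lemma exists_ne_zero_forall_eq_zero (C : Submodule F (ι → F)) {T : Finset ι}
    (hT : #T < Module.finrank F C) : ∃ c ∈ C, c ≠ 0 ∧ ∀ j ∈ T, c j = 0 := by
  have : LinearMap.ker (restrictCoords C T) ≠ ⊥ :=
    LinearMap.ker_ne_bot_of_finrank_lt (by simpa using hT)
  obtain ⟨⟨c, hc⟩, hker, hne⟩ := (Submodule.ne_bot_iff _).mp this
  exact ⟨c, hc, fun h => hne (by simp [h]), fun j hj => congrFun hker ⟨j, hj⟩⟩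

lemma hasMinDist_iff_isMDS (C : Submodule F (ι → F)) :
    hasMinDist C (Fintype.card ι - Module.finrank F C + 1) ↔ IsMDS C := by
  have hk := finrank_le_card C
  constructor
  · rintro ⟨⟨c, hc, hc0, -⟩, hlow⟩
    refine ⟨Module.finrank_pos_iff_exists_ne_zero.mpr ⟨⟨c, hc⟩, by simpa using hc0⟩, ?_⟩
    intro c hc T hT hcT
    by_contra hc0
    have := hlow c hc hc0
    have := wt_add_card_le hcT
    omega
  · rintro ⟨hpos, hvanish⟩
    have hlow : ∀ c ∈ C, c ≠ 0 → Fintype.card ι - Module.finrank F C + 1 ≤ wt c := by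
      intro c hc hc0
      by_contra! hlt
      obtain ⟨T, hT, hcT⟩ := exists_card_eq_forall_eq_zero (c := c) (m := Module.finrank F C)
        (by omega)
      exact hc0 (hvanish c hc T hT.ge hcT)
    obtain ⟨T, -, hT⟩ := exists_subset_card_eq (s := (univ : Finset ι))
      (n := Module.finrank F C - 1) (by simp; omega)
    obtain ⟨c, hc, hc0, hcT⟩ := exists_ne_zero_forall_eq_zero C (T := T) (by omega)
    have := wt_add_card_le hcT
    have := hlow c hc hc0
    exact ⟨⟨c, hc, hc0, by omega⟩, hlow⟩

lemma restrictCoords_surjective [DecidableEq ι] {C : Submodule F (ι → F)} {Z : Finset ι}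
    (hZ : ∀ i ∈ Z, ∃ w ∈ C, (∀ j ∈ Z.erase i, w j = 0) ∧ w i ≠ 0) :
    Function.Surjective (restrictCoords C Z) := by
  rw [← LinearMap.range_eq_top, eq_top_iff, ← (Pi.basisFun F Z).span_eq, Submodule.span_le]
  rintro _ ⟨i, rfl⟩
  obtain ⟨w, hw, hw0, hwi⟩ := hZ i i.2
  have : restrictCoords C Z ⟨w, hw⟩ = w i • Pi.basisFun F Z i := by
    ext j
    rcases eq_or_ne j i with rfl | hji
    · simp
    · simp [hji, hw0 j (mem_erase.mpr ⟨Subtype.coe_ne_coe.mpr hji, j.2⟩)]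
  rw [← inv_smul_smul₀ hwi (Pi.basisFun F Z i), ← this]
  exact Submodule.smul_mem _ _ (LinearMap.mem_range_self _ _)

lemma eq_zero_of_restrictCoords_surjective {C : Submodule F (ι → F)} {Z : Finset ι}
    (hsurj : Function.Surjective (restrictCoords C Z)) (hZ : #Z = Module.finrank F C)
    {c : ι → F} (hc : c ∈ C) (hcZ : ∀ j ∈ Z, c j = 0) : c = 0 := by
  have hinj : Function.Injective (restrictCoords C Z) :=
    (LinearMap.injective_iff_surjective_of_finrank_eq_finrank (by simp [hZ])).mpr hsurj
  have : (⟨c, hc⟩ : C) = 0 := hinj (by ext j; simp [hcZ j j.2])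
  simpa using congrArg Subtype.val this

lemma IsMDS.exists_forall_eq_zero_apply_ne_zero {C : Submodule F (ι → F)} (hC : IsMDS C)
    {T : Finset ι} (hT : #T + 1 = Module.finrank F C) {i : ι} (hi : i ∉ T) :
    ∃ u ∈ C, (∀ j ∈ T, u j = 0) ∧ u i ≠ 0 := by
  classical
  obtain ⟨u, hu, hu0, huT⟩ := exists_ne_zero_forall_eq_zero C (T := T) (by omega)
  refine ⟨u, hu, huT, fun hui => hu0 (hC.2 u hu (insert i T) ?_ ?_)⟩
  · rw [card_insert_of_notMem hi]; omega
  · simpa [hui] using huT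

lemma IsMDS.exists_mem_schurProd [DecidableEq ι] {A B : Submodule F (ι → F)} (hA : IsMDS A)
    (hB : IsMDS B) {SA SB : Finset ι} (hSA : #SA + 1 = Module.finrank F A)
    (hSB : #SB + 1 = Module.finrank F B) {i : ι} (hi : i ∉ SA ∪ SB) :
    ∃ w ∈ schurProd A B, (∀ j ∈ SA ∪ SB, w j = 0) ∧ w i ≠ 0 := by
  rw [mem_union, not_or] at hi
  obtain ⟨u, hu, hu0, hui⟩ := hA.exists_forall_eq_zero_apply_ne_zero hSA hi.1
  obtain ⟨v, hv, hv0, hvi⟩ := hB.exists_forall_eq_zero_apply_ne_zero hSB hi.2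
  refine ⟨u * v, mul_mem_schurProd hu hv, fun j hj => ?_, mul_ne_zero hui hvi⟩
  rcases mem_union.mp hj with hj | hj
  · simp [hu0 j hj]
  · simp [hv0 j hj]

theorem IsMDS.schurProd {A B : Submodule F (ι → F)} (hA : IsMDS A) (hB : IsMDS B)
    (hdim : Module.finrank F (schurProd A B) = Module.finrank F A + Module.finrank F B - 1) :
    IsMDS (schurProd A B) := by
  classical
  have ha := hA.1
  have hb := hB.1
  refine ⟨by omega, fun c hc T hT hcT => ?_⟩
  obtain ⟨Z, hZT, hZ⟩ := exists_subset_card_eq hT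
  refine eq_zero_of_restrictCoords_surjective (restrictCoords_surjective fun i hi => ?_) hZ hc
    fun j hj => hcT j (hZT hj)
  have hcard : #(Z.erase i) + 2 = Module.finrank F A + Module.finrank F B := by
    rw [card_erase_of_mem hi]; omega
  obtain ⟨SA, hSA, hSAcard⟩ :=
    exists_subset_card_eq (s := Z.erase i) (n := Module.finrank F A - 1) (by omega)
  obtain ⟨w, hw, hw0, hwi⟩ := hA.exists_mem_schurProd hB (SA := SA) (SB := Z.erase i \ SA)
    (i := i) (by omega) (by rw [card_sdiff_of_subset hSA]; omega)
    (by simpa using fun h => notMem_erase i Z (hSA h))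
  exact ⟨w, hw, by rwa [union_sdiff_of_subset hSA] at hw0, hwi⟩

end Code

theorem schur_mds_general {F : Type*} [Field F] {n : ℕ}
    (A B : Submodule F (Fin n → F))
    (hA : hasMinDist A (n - Module.finrank F A + 1))
    (hB : hasMinDist B (n - Module.finrank F B + 1))
    (hdim : Module.finrank F (schurProd A B) = Module.finrank F A + Module.finrank F B - 1) :
    hasMinDist (schurProd A B) (n - Module.finrank F (schurProd A B) + 1) := by
  have hMDS (C : Submodule F (Fin n → F)) :
      hasMinDist C (n - Module.finrank F C + 1) ↔ Code.IsMDS C := by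
    simpa using Code.hasMinDist_iff_isMDS C
  rw [hMDS] at hA hB ⊢
  exact hA.schurProd hB hdim

/-- if `A`, `B` are MDS and `dim (A * B) = dim A + dim B - 1`,
then `A * B` is MDS. -/
theorem schur_mds {F : Type*} [Field F] [Fintype F] {n : ℕ}
    (A B : Submodule F (Fin n → F))
    (hA : hasMinDist A (n - Module.finrank F A + 1))
    (hB : hasMinDist B (n - Module.finrank F B + 1))
    (hdim : Module.finrank F (schurProd A B) = Module.finrank F A + Module.finrank F B - 1) :
    hasMinDist (schurProd A B) (n - Module.finrank F (schurProd A B) + 1) :=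
  schur_mds_general A B hA hB hdim
end

section
/- Let α = (α_1,...,α_n) ∈ F_q^n have pairwise distinct entries, v ∈ (F_q^*)^n, η ∈ F_q^*, and 2 ≤ k < n. The (+)-twisted generalized Reed-Solomon code C_k(α, v, η) (with twist t=1, hook h=k-1) is MDS if and only if -η^{-1} ∉ S_{k,+}(α), and NMDS if and only if -η^{-1} ∈ S_{k,+}(α), where S_{k,+}(α) = { Σ_{i∈I} α_i : I ⊆ {1,...,n}, |I| = k }. -/
open Finset

/-- The `(+)`-twisted generalized Reed–Solomon code (twist `t = 1`, hook `h = k-1`):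
evaluations of the polynomials `f(x) = Σ_{i<k} a_i x^i + η a_{k-1} x^k`. -/
def tgrsPlus {F : Type*} [Field F] {n : ℕ} (k : ℕ) (α v : Fin n → F) (η : F) :
    Submodule F (Fin n → F) :=
  Submodule.span F
    {c | ∃ p : Polynomial F, p.natDegree ≤ k ∧ p.coeff k = η * p.coeff (k - 1) ∧
      ∀ j, c j = v j * p.eval (α j)}

/-- `S_{k,+}(α)`: the set of sums of `k` distinct coordinates of `α`. -/
def SkPlus {F : Type*} [Field F] {n : ℕ} (k : ℕ) (α : Fin n → F) : Set F :=
  {s | ∃ I : Finset (Fin n), I.card = k ∧ s = ∑ i ∈ I, α i}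


/-!
A codeword is `(v_j p(α_j))_j` with `deg p ≤ k` and `p_k = η p_{k-1}`, so a nonzero codeword has
at most `k` zeros. If it has exactly `k` zeros, at `α_i` for `i ∈ I`, then
`p = p_k ∏_{i ∈ I} (X - α_i)`, and the twist condition forces `∑_{i ∈ I} α_i = -η⁻¹`.
Conversely such an `I` gives a codeword of weight `n - k`; without one,
`(X + η⁻¹ + ∑_{i ∈ I} α_i) ∏_{i ∈ I} (X - α_i)` with `#I = k - 1` has weight `n - k + 1`.
For the dual: polynomials of degree `< k - 1` are messages, which bounds dual weights below by `k`,
and when `∑_{i ∈ I} α_i = -η⁻¹` the values of `X^(k-1)` on `I` agree with no codeword there,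
which produces a nonzero dual word supported on `I`.
-/

open Polynomial Lagrange Function

section Weight

variable {F ι : Type*} [Zero F]

theorem wt_eq_card_of_ne_zero_iff {c : ι → F} {J : Finset ι} (hJ : ∀ j, c j ≠ 0 ↔ j ∈ J) :
    wt c = #J := by
  rw [wt, Nat.card_congr (Equiv.subtypeEquivRight hJ), Nat.card_eq_finsetCard]

theorem wt_eq_card_sub_of_eq_zero_iff [Fintype ι] {c : ι → F} {I : Finset ι}
    (hI : ∀ j, c j = 0 ↔ j ∈ I) : wt c = Fintype.card ι - #I := by
  classical
  rw [wt_eq_card_of_ne_zero_iff (J := univ \ I) (by simp [hI]),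
    card_sdiff_of_subset (subset_univ I), card_univ]

theorem wt_le_card_of_eq_zero {c : ι → F} {I : Finset ι} (hI : ∀ j ∉ I, c j = 0) : wt c ≤ #I := by
  classical
  rw [wt_eq_card_of_ne_zero_iff (J := {j ∈ I | c j ≠ 0}) fun j => by grind]
  exact card_filter_le _ _

theorem ne_zero_of_wt_pos {c : ι → F} (hc : 0 < wt c) : c ≠ 0 := by
  rintro rfl
  simp [wt] at hc

end Weight

theorem hasMinDist.unique {F ι : Type*} [Field F] {C : Submodule F (ι → F)} {d d' : ℕ}
    (h : hasMinDist C d) (h' : hasMinDist C d') : d = d' := by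
  obtain ⟨⟨c, hc, hc0, rfl⟩, hmin⟩ := h
  obtain ⟨⟨c', hc', hc0', rfl⟩, hmin'⟩ := h'
  exact (hmin c' hc' hc0').antisymm (hmin' c hc hc0)

theorem exists_mem_dualCode_of_forall_exists_ne {F ι : Type*} [Field F] [Fintype ι]
    {C : Submodule F (ι → F)} {I : Finset ι} {w : ι → F} (hw : ∀ c ∈ C, ∃ i ∈ I, c i ≠ w i) :
    ∃ x ∈ dualCode C, x ≠ 0 ∧ ∀ j ∉ I, x j = 0 := by
  classical
  let W : Submodule F (ι → F) := C ⊔ ⨅ i ∈ I, LinearMap.ker (LinearMap.proj i)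
  have hwW : w ∉ W := by
    intro hwW
    obtain ⟨c, hc, u, hu, rfl⟩ := Submodule.mem_sup.1 hwW
    obtain ⟨i, hi, hne⟩ := hw c hc
    simp only [Submodule.mem_iInf, LinearMap.mem_ker, LinearMap.proj_apply] at hu
    simp [hu i hi] at hne
  obtain ⟨f, hfw, hWf⟩ := Submodule.exists_le_ker_of_notMem hwW
  let x : ι → F := fun i => f fun j => if i = j then 1 else 0
  have hf : ∀ u, f u = ∑ i, x i * u i := fun u => by
    rw [f.pi_apply_eq_sum_univ u]
    exact sum_congr rfl fun i _ => mul_comm _ _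
  refine ⟨x, fun c hc => ?_, fun hx => hfw ?_, fun j hj => hWf (Submodule.mem_sup_right ?_)⟩
  · rw [← hf]
    exact hWf (Submodule.mem_sup_left hc)
  · simp [hf, hx]
  · simp only [Submodule.mem_iInf, LinearMap.mem_ker, LinearMap.proj_apply]
    exact fun i hi => if_neg (ne_of_mem_of_not_mem hi hj).symm

section Nodal

variable {F ι : Type*} [Field F] {α : ι → F}

theorem eval_nodal_eq_zero_iff (hα : Injective α) {I : Finset ι} {j : ι} :
    (nodal I α).eval (α j) = 0 ↔ j ∈ I := by
  refine ⟨fun h => by_contra fun hj => eval_nodal_not_at_node ?_ h, eval_nodal_at_node⟩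
  exact fun i hi => hα.ne (ne_of_mem_of_not_mem hi hj).symm

theorem coeff_card_sub_one_nodal {I : Finset ι} (hI : I.Nonempty) :
    (nodal I α).coeff (#I - 1) = -∑ i ∈ I, α i := by
  rw [← prod_X_sub_C_nextCoeff, ← nodal, nextCoeff_of_natDegree_pos (by simpa using hI.card_pos),
    natDegree_nodal]

theorem card_le_natDegree_of_eval_eq_zero (hα : Injective α) {p : F[X]} (hp : p ≠ 0)
    {Z : Finset ι} (hZ : ∀ j ∈ Z, p.eval (α j) = 0) : #Z ≤ p.natDegree := by
  by_contra! h
  exact hp (eq_zero_of_natDegree_lt_card_of_eval_eq_zero p (f := fun j : Z => α j)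
    (hα.comp Subtype.val_injective) (fun j => hZ j j.2) (by rwa [Fintype.card_coe]))

theorem eq_C_coeff_mul_nodal (hα : Injective α) {I : Finset ι} {q : F[X]}
    (hq : q.natDegree ≤ #I) (h0 : ∀ i ∈ I, q.eval (α i) = 0) :
    q = C (q.coeff #I) * nodal I α := by
  refine eq_of_degree_sub_lt_of_eval_index_eq I hα.injOn ?_ fun i hi => ?_
  · refine (degree_lt_iff_coeff_zero _ _).2 fun m hm => ?_
    rcases hm.lt_or_eq with hm | rfl
    · have hC : (C (q.coeff #I) * nodal I α).natDegree < m :=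
        (natDegree_C_mul_le _ _).trans_lt (by rwa [natDegree_nodal])
      rw [coeff_sub, coeff_eq_zero_of_natDegree_lt (hq.trans_lt hm),
        coeff_eq_zero_of_natDegree_lt hC, sub_zero]
    · have h1 : (nodal I α).coeff #I = 1 := by
        simpa using (nodal_monic (s := I) (v := α)).coeff_natDegree
      rw [coeff_sub, coeff_C_mul, h1, mul_one, sub_self]
  · rw [h0 i hi, eval_mul, eval_nodal_at_node hi, mul_zero]

theorem coeff_card_sub_one_eq_of_eval_eq_zero (hα : Injective α) {I : Finset ι} (hI : I.Nonempty)
    {q : F[X]} (hq : q.natDegree ≤ #I) (h0 : ∀ i ∈ I, q.eval (α i) = 0) :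
    q.coeff (#I - 1) = -q.coeff #I * ∑ i ∈ I, α i := by
  conv_lhs => rw [eq_C_coeff_mul_nodal hα hq h0]
  rw [coeff_C_mul, coeff_card_sub_one_nodal hI, mul_neg, neg_mul]

end Nodal

section TGRS

variable {F : Type*} [Field F] {n k : ℕ} {α v : Fin n → F} {η : F}

def twistedPolys (k : ℕ) (η : F) : Submodule F F[X] where
  carrier := {p | p.natDegree ≤ k ∧ p.coeff k = η * p.coeff (k - 1)}
  add_mem' {p q} hp hq :=
    ⟨(natDegree_add_le p q).trans (max_le hp.1 hq.1), by simp only [coeff_add, hp.2, hq.2]; ring⟩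
  zero_mem' := by simp
  smul_mem' r p hp :=
    ⟨(natDegree_smul_le r p).trans hp.1, by simp only [coeff_smul, smul_eq_mul, hp.2]; ring⟩

theorem mem_twistedPolys_of_natDegree_lt {p : F[X]} (hp : p.natDegree < k - 1) :
    p ∈ twistedPolys k η :=
  ⟨by omega, by rw [coeff_eq_zero_of_natDegree_lt (by omega),
    coeff_eq_zero_of_natDegree_lt hp, mul_zero]⟩

theorem Polynomial.Monic.mem_twistedPolys {p : F[X]} (hp : p.Monic) (hdeg : p.natDegree = k)
    (hnext : p.nextCoeff = η⁻¹) (hη : η ≠ 0) : p ∈ twistedPolys k η := by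
  refine ⟨hdeg.le, ?_⟩
  rcases Nat.eq_zero_or_pos k with rfl | hk
  · simp only [nextCoeff, hdeg, if_true] at hnext
    exact absurd (inv_eq_zero.1 hnext.symm) hη
  · rw [nextCoeff_of_natDegree_pos (hdeg ▸ hk), hdeg] at hnext
    rw [← hdeg, hp.coeff_natDegree, hdeg, hnext, mul_inv_cancel₀ hη]

theorem mem_tgrsPlus_iff {c : Fin n → F} :
    c ∈ tgrsPlus k α v η ↔ ∃ p ∈ twistedPolys k η, c = fun j => v j * p.eval (α j) := by
  let ev : F[X] →ₗ[F] Fin n → F := LinearMap.pi fun j => v j • leval (α j)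
  have : tgrsPlus k α v η = (twistedPolys k η).map ev := by
    rw [tgrsPlus, ← Submodule.span_eq ((twistedPolys k η).map ev)]
    congr 1
    ext c
    simp [ev, twistedPolys, funext_iff, eq_comm, and_assoc]
  rw [this, Submodule.mem_map]
  simp [ev, eq_comm, funext_iff]

theorem wt_mul_eval_eq (hv : ∀ j, v j ≠ 0) {p : F[X]} {I : Finset (Fin n)}
    (hI : ∀ j, p.eval (α j) = 0 ↔ j ∈ I) : wt (fun j => v j * p.eval (α j)) = n - #I := by
  rw [wt_eq_card_sub_of_eq_zero_iff (I := I) fun j => by simp [hv j, hI j], Fintype.card_fin]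

theorem exists_zeros_of_mem_tgrsPlus (hα : Injective α) (hv : ∀ j, v j ≠ 0) {c : Fin n → F}
    (hc : c ∈ tgrsPlus k α v η) (hc0 : c ≠ 0) :
    ∃ p ∈ twistedPolys k η, p ≠ 0 ∧ ∃ Z : Finset (Fin n),
      #Z ≤ k ∧ wt c = n - #Z ∧ ∀ j ∈ Z, p.eval (α j) = 0 := by
  classical
  obtain ⟨p, hp, rfl⟩ := mem_tgrsPlus_iff.1 hc
  have hp0 : p ≠ 0 := by rintro rfl; exact hc0 (funext fun j => by simp)
  have hZ (j) (hj : j ∈ ({j | p.eval (α j) = 0} : Finset (Fin n))) := (mem_filter.1 hj).2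
  exact ⟨p, hp, hp0, _, (card_le_natDegree_of_eval_eq_zero hα hp0 hZ).trans hp.1,
    wt_mul_eval_eq hv (by simp), hZ⟩

theorem sub_le_wt_of_mem_tgrsPlus (hα : Injective α) (hv : ∀ j, v j ≠ 0) {c : Fin n → F}
    (hc : c ∈ tgrsPlus k α v η) (hc0 : c ≠ 0) : n - k ≤ wt c := by
  obtain ⟨-, -, -, Z, hZ, hwt, -⟩ := exists_zeros_of_mem_tgrsPlus hα hv hc hc0
  omega

theorem sum_eq_neg_inv_of_eval_eq_zero (hα : Injective α) (hk : 0 < k) {p : F[X]}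
    (hp : p ∈ twistedPolys k η) (hp0 : p ≠ 0) {I : Finset (Fin n)} (hI : #I = k)
    (h0 : ∀ i ∈ I, p.eval (α i) = 0) : ∑ i ∈ I, α i = -η⁻¹ := by
  subst hI
  have hk0 : p.coeff #I ≠ 0 := fun h =>
    hp0 (by rw [eq_C_coeff_mul_nodal hα hp.1 h0, h, C_0, zero_mul])
  have h1 := coeff_card_sub_one_eq_of_eval_eq_zero hα (card_pos.1 hk) hp.1 h0
  have h2 : p.coeff #I * (η * ∑ i ∈ I, α i + 1) = 0 := by linear_combination hp.2 + η * h1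
  have h3 := (mul_eq_zero.1 h2).resolve_left hk0
  have hη : η ≠ 0 := by rintro rfl; simp at h3
  field_simp
  linear_combination h3

theorem sub_add_one_le_wt_of_mem_tgrsPlus (hα : Injective α) (hv : ∀ j, v j ≠ 0) (hk : 0 < k)
    (hkn : k ≤ n) (hS : -η⁻¹ ∉ SkPlus k α) {c : Fin n → F} (hc : c ∈ tgrsPlus k α v η)
    (hc0 : c ≠ 0) : n - k + 1 ≤ wt c := by
  obtain ⟨p, hp, hp0, Z, hZ, hwt, h0⟩ := exists_zeros_of_mem_tgrsPlus hα hv hc hc0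
  have hZk : #Z ≠ k := fun hZk =>
    hS ⟨Z, hZk, (sum_eq_neg_inv_of_eval_eq_zero hα hk hp hp0 hZk h0).symm⟩
  omega

theorem exists_mem_tgrsPlus_wt_eq_sub_add_one (hα : Injective α) (hv : ∀ j, v j ≠ 0) (hη : η ≠ 0)
    (hk : 0 < k) (hkn : k < n) (hS : -η⁻¹ ∉ SkPlus k α) :
    ∃ c ∈ tgrsPlus k α v η, c ≠ 0 ∧ wt c = n - k + 1 := by
  classical
  obtain ⟨I, -, hI⟩ := exists_subset_card_eq (s := (univ : Finset (Fin n))) (n := k - 1)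
    (by simp only [card_univ, Fintype.card_fin]; omega)
  set a := η⁻¹ + ∑ i ∈ I, α i
  set p := nodal I α * (X + C a)
  have hp : p.Monic := nodal_monic.mul (monic_X_add_C a)
  have hdeg : p.natDegree = k := by
    rw [nodal_monic.natDegree_mul (monic_X_add_C a), natDegree_nodal, natDegree_X_add_C, hI]
    omega
  have hnext : p.nextCoeff = η⁻¹ := by
    rw [nodal_monic.nextCoeff_mul (monic_X_add_C a), nodal, prod_X_sub_C_nextCoeff,
      nextCoeff_X_add_C]
    ring
  have hzero : ∀ j, p.eval (α j) = 0 ↔ j ∈ I := by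
    intro j
    rw [eval_mul, mul_eq_zero, eval_nodal_eq_zero_iff hα, or_iff_left_iff_imp]
    intro hj
    by_contra hjI
    refine hS ⟨insert j I, by rw [card_insert_of_notMem hjI, hI]; omega, ?_⟩
    simp only [eval_add, eval_X, eval_C] at hj
    rw [sum_insert hjI]
    linear_combination -hj
  have hwt := wt_mul_eval_eq (v := v) hv hzero
  refine ⟨_, mem_tgrsPlus_iff.2 ⟨p, hp.mem_twistedPolys hdeg hnext hη, rfl⟩,
    ne_zero_of_wt_pos (by omega), by omega⟩

theorem hasMinDist_tgrsPlus_of_neg_inv_mem (hα : Injective α) (hv : ∀ j, v j ≠ 0) (hη : η ≠ 0)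
    (hkn : k < n) (hS : -η⁻¹ ∈ SkPlus k α) : hasMinDist (tgrsPlus k α v η) (n - k) := by
  obtain ⟨I, hI, hsum⟩ := hS
  have hnext : (nodal I α).nextCoeff = η⁻¹ := by
    rw [nodal, prod_X_sub_C_nextCoeff, ← hsum, neg_neg]
  have hmem := nodal_monic.mem_twistedPolys (by rw [natDegree_nodal, hI]) hnext hη
  have hwt : wt (fun j => v j * (nodal I α).eval (α j)) = n - k := by
    rw [wt_mul_eval_eq hv fun j => eval_nodal_eq_zero_iff hα, hI]
  exact ⟨⟨_, mem_tgrsPlus_iff.2 ⟨_, hmem, rfl⟩, ne_zero_of_wt_pos (by omega), hwt⟩,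
    fun c hc hc0 => sub_le_wt_of_mem_tgrsPlus hα hv hc hc0⟩

theorem hasMinDist_tgrsPlus_of_neg_inv_notMem (hα : Injective α) (hv : ∀ j, v j ≠ 0)
    (hη : η ≠ 0) (hk : 0 < k) (hkn : k < n) (hS : -η⁻¹ ∉ SkPlus k α) :
    hasMinDist (tgrsPlus k α v η) (n - k + 1) :=
  ⟨exists_mem_tgrsPlus_wt_eq_sub_add_one hα hv hη hk hkn hS,
    fun _ hc hc0 => sub_add_one_le_wt_of_mem_tgrsPlus hα hv hk hkn.le hS hc hc0⟩

theorem le_wt_of_mem_dualCode_tgrsPlus (hα : Injective α) (hv : ∀ j, v j ≠ 0) {x : Fin n → F}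
    (hx : x ∈ dualCode (tgrsPlus k α v η)) (hx0 : x ≠ 0) : k ≤ wt x := by
  classical
  by_contra! hlt
  set J : Finset (Fin n) := {j | x j ≠ 0}
  have hJwt : wt x = #J := wt_eq_card_of_ne_zero_iff (by simp [J])
  obtain ⟨j₀, hj₀⟩ : ∃ j, x j ≠ 0 := Function.ne_iff.1 hx0
  have hJ : j₀ ∈ J := by simp [J, hj₀]
  set p := nodal (J.erase j₀) α
  have hp : p ∈ twistedPolys k η := by
    refine mem_twistedPolys_of_natDegree_lt ?_
    rw [natDegree_nodal, card_erase_of_mem hJ]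
    have := card_pos.2 ⟨j₀, hJ⟩
    omega
  have hsum := hx _ (mem_tgrsPlus_iff.2 ⟨p, hp, rfl⟩)
  rw [sum_eq_single j₀ (fun j _ hj => ?_) (by simp)] at hsum
  · exact mul_ne_zero hj₀ (mul_ne_zero (hv j₀)
      ((eval_nodal_eq_zero_iff hα).not.2 (notMem_erase j₀ J))) hsum
  · by_cases hxj : x j = 0
    · simp [hxj]
    · simp [p, eval_nodal_eq_zero_iff hα, hj, J, hxj]

theorem exists_mem_dualCode_tgrsPlus_wt_le (hα : Injective α) (hv : ∀ j, v j ≠ 0) (hη : η ≠ 0)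
    (hk : 0 < k) (hS : -η⁻¹ ∈ SkPlus k α) :
    ∃ x ∈ dualCode (tgrsPlus k α v η), x ≠ 0 ∧ wt x ≤ k := by
  obtain ⟨I, hI, hsum⟩ := hS
  suffices hw : ∀ c ∈ tgrsPlus k α v η, ∃ i ∈ I, c i ≠ v i * α i ^ (k - 1) by
    obtain ⟨x, hx, hx0, hxI⟩ := exists_mem_dualCode_of_forall_exists_ne hw
    exact ⟨x, hx, hx0, hI ▸ wt_le_card_of_eq_zero hxI⟩
  intro c hc
  obtain ⟨p, hp, rfl⟩ := mem_tgrsPlus_iff.1 hc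
  by_contra! heq
  have h0 : ∀ i ∈ I, (p - X ^ (k - 1)).eval (α i) = 0 := fun i hi => by
    simpa [sub_eq_zero, hv i] using heq i hi
  have hdeg : (p - X ^ (k - 1)).natDegree ≤ #I := by
    rw [hI]
    exact (natDegree_sub_le _ _).trans (max_le hp.1 ((natDegree_X_pow_le _).trans (by omega)))
  have h1 := coeff_card_sub_one_eq_of_eval_eq_zero hα (card_pos.1 (hI ▸ hk)) hdeg h0
  simp only [hI, coeff_sub, coeff_X_pow, if_pos, if_neg (show k ≠ k - 1 by omega), hp.2,
    ← hsum] at h1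
  exact one_ne_zero
    (by linear_combination -h1 - p.coeff (k - 1) * mul_inv_cancel₀ hη : (1 : F) = 0)

theorem hasMinDist_dualCode_tgrsPlus_of_neg_inv_mem (hα : Injective α) (hv : ∀ j, v j ≠ 0)
    (hη : η ≠ 0) (hk : 0 < k) (hS : -η⁻¹ ∈ SkPlus k α) :
    hasMinDist (dualCode (tgrsPlus k α v η)) k := by
  obtain ⟨x, hx, hx0, hwt⟩ := exists_mem_dualCode_tgrsPlus_wt_le hα hv hη hk hS
  exact ⟨⟨x, hx, hx0, hwt.antisymm (le_wt_of_mem_dualCode_tgrsPlus hα hv hx hx0)⟩,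
    fun y hy hy0 => le_wt_of_mem_dualCode_tgrsPlus hα hv hy hy0⟩

end TGRS

theorem tgrs_mds_nmds_general {F : Type*} [Field F] {n k : ℕ}
    (α v : Fin n → F) (η : F)
    (hα : Function.Injective α) (hv : ∀ j, v j ≠ 0) (hη : η ≠ 0)
    (hk2 : 2 ≤ k) (hkn : k < n) :
    (hasMinDist (tgrsPlus k α v η) (n - k + 1) ↔ -η⁻¹ ∉ SkPlus k α) ∧
    ((hasMinDist (tgrsPlus k α v η) (n - k) ∧ hasMinDist (dualCode (tgrsPlus k α v η)) k)
      ↔ -η⁻¹ ∈ SkPlus k α) := by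
  have hk : 0 < k := by omega
  have mds := hasMinDist_tgrsPlus_of_neg_inv_notMem (v := v) hα hv hη hk hkn
  have nmds := fun hS : -η⁻¹ ∈ SkPlus k α =>
    And.intro (hasMinDist_tgrsPlus_of_neg_inv_mem hα hv hη hkn hS)
      (hasMinDist_dualCode_tgrsPlus_of_neg_inv_mem hα hv hη hk hS)
  refine ⟨⟨fun h hS => ?_, mds⟩, ⟨fun h => by_contra fun hS => ?_, nmds⟩⟩
  · have := h.unique (nmds hS).1
    omega
  · have := h.1.unique (mds hS)
    omega

/-- the `(+)`-TGRS code is MDS iff `-η⁻¹ ∉ S_{k,+}(α)`,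
and NMDS iff `-η⁻¹ ∈ S_{k,+}(α)`. -/
theorem tgrs_mds_nmds {F : Type*} [Field F] [Fintype F] {n k : ℕ}
    (α v : Fin n → F) (η : F)
    (hα : Function.Injective α) (hv : ∀ j, v j ≠ 0) (hη : η ≠ 0)
    (hk2 : 2 ≤ k) (hkn : k < n) :
    (hasMinDist (tgrsPlus k α v η) (n - k + 1) ↔ -η⁻¹ ∉ SkPlus k α) ∧
    ((hasMinDist (tgrsPlus k α v η) (n - k) ∧ hasMinDist (dualCode (tgrsPlus k α v η)) k)
      ↔ -η⁻¹ ∈ SkPlus k α) :=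
  tgrs_mds_nmds_general α v η hα hv hη hk2 hkn
end

section
/- Let ℓ ≥ 2 with 2ℓ < n - 2, let C be an [n, n-2ℓ-1, 2ℓ+2] MDS code over F_q and let (A, B) be an ℓ-error-correcting pair for C over F_{q^m} with dim A = ℓ+2 and d(A) = n-ℓ-1. Then dim B = ℓ, the pair (A,B) is PMDS (i.e., 2 ≤ d(A*B) = n - dim A - dim B + 2 = n - 2ℓ), and A*B = C^⊥. -/
open Finset

/-! Call a code `t`-interpolating if it takes arbitrary prescribed values on any `t` coordinates.
This holds iff the dual code has minimum distance `> t`, and an MDS code of dimension `k` is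
`k`-interpolating. The Schur product of an `s`- and a `t`-interpolating code is
`(s + t - 1)`-interpolating. With `D = C ⊗ K` (MDS of dimension `n - 2ℓ - 1`), `A` (MDS of dimension
`ℓ + 2`) and `B` (`ℓ`-interpolating), `A * B` is `(2ℓ + 1)`-interpolating, so its dimension is at
least `2ℓ + 1 = dim D^⊥` and `A * B = D^⊥`. Moreover `B ⊆ (A * D)^⊥` and `A * D` is
`(n - ℓ)`-interpolating, so `dim B ≤ ℓ`. Finally `D^⊥` has distance `> n - 2ℓ - 1` because `D` is
`(n - 2ℓ - 1)`-interpolating, while the `(2ℓ + 1)`-interpolating code `A * B` has a nonzero word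
vanishing on `2ℓ` coordinates. -/

open Module

section Interpolation

variable {K : Type*} [Field K] {ι : Type*}

def IsInterpolating (V : Submodule K (ι → K)) (t : ℕ) : Prop :=
  ∀ S : Finset ι, #S ≤ t → ∀ f : ι → K, ∃ v ∈ V, ∀ i ∈ S, v i = f i

theorem wt_le_card_of_eq_zero_s17 {c : ι → K} {s : Finset ι} (h : ∀ i ∉ s, c i = 0) :
    wt c ≤ #s := by
  rw [wt, ← Nat.card_eq_finsetCard]
  exact Nat.card_le_card_of_injective (fun i => ⟨i.1, by_contra fun hi => i.2 (h _ hi)⟩)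
    fun a b hab => Subtype.ext (by simpa using hab)

variable [Fintype ι]

theorem dualCode_eq_comap [DecidableEq ι] (V : Submodule K (ι → K)) :
    dualCode V = V.dualAnnihilator.comap (dotProductEquiv K ι).toLinearMap := by
  ext x
  simp [Submodule.mem_dualAnnihilator, dualCode, dotProduct]

theorem finrank_dualCode_add_finrank (V : Submodule K (ι → K)) :
    finrank K (dualCode V) + finrank K V = Fintype.card ι := by
  classical
  rw [dualCode_eq_comap, Submodule.comap_equiv_eq_map_symm, LinearEquiv.finrank_map_eq, add_comm,
    Subspace.finrank_add_finrank_dualAnnihilator_eq, finrank_fintype_fun_eq_card]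

theorem IsInterpolating.lt_wt_of_mem_dualCode {V : Submodule K (ι → K)} {t : ℕ}
    (hV : IsInterpolating V t) {y : ι → K} (hy : y ∈ dualCode V) (hy0 : y ≠ 0) : t < wt y := by
  classical
  by_contra! hwt
  obtain ⟨j, hj⟩ := Function.ne_iff.mp hy0
  let S : Finset ι := {i | y i ≠ 0}
  have hS : #S = wt y := by rw [wt, Nat.card_eq_fintype_card, Fintype.card_subtype]
  obtain ⟨v, hv, hvS⟩ := hV S (hS ▸ hwt) (Pi.single j 1)
  have hyv : ∑ i, y i * v i = y j := by
    rw [sum_eq_single j]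
    · simp [hvS j (by simpa [S] using hj)]
    · intro i _ hij
      by_cases hi : y i = 0
      · simp [hi]
      · simp [hvS i (by simpa [S] using hi), Pi.single_eq_of_ne hij]
    · simp
  exact hj (hyv ▸ hy v hv)

theorem isInterpolating_of_lt_wt_dualCode {V : Submodule K (ι → K)} {t : ℕ}
    (hd : ∀ y ∈ dualCode V, y ≠ 0 → t < wt y) : IsInterpolating V t := by
  classical
  intro S hS f
  let r := LinearMap.funLeft K K ((↑) : S → ι)
  suffices V.map r = ⊤ by
    obtain ⟨v, hv, hvf⟩ : f ∘ (↑) ∈ V.map r := this ▸ Submodule.mem_top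
    exact ⟨v, hv, fun i hi => congrFun hvf ⟨i, hi⟩⟩
  by_contra hne
  obtain ⟨w, hw, hw0⟩ : ∃ w ∈ dualCode (V.map r), w ≠ 0 := by
    refine (Submodule.ne_bot_iff _).mp fun hbot => ?_
    have hsum := finrank_dualCode_add_finrank (V.map r)
    have hlt := Submodule.finrank_lt hne
    rw [hbot, finrank_bot, zero_add, Fintype.card_coe] at hsum
    rw [finrank_fintype_fun_eq_card, Fintype.card_coe] at hlt
    omega
  let y : ι → K := fun i => if h : i ∈ S then w ⟨i, h⟩ else 0
  have hyS : ∀ i ∉ S, y i = 0 := fun i hi => dif_neg hi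
  have hy : y ∈ dualCode V := fun c hc => by
    rw [← sum_subset (subset_univ S) fun i _ hi => by rw [hyS i hi, zero_mul], ← sum_coe_sort]
    simpa [y, r] using hw (r c) (Submodule.mem_map_of_mem hc)
  have hy0 : y ≠ 0 := fun h => hw0 (funext fun j => by simpa [y] using congrFun h j)
  exact (hd y hy hy0).not_ge ((wt_le_card_of_eq_zero_s17 hyS).trans hS)

theorem isInterpolating_of_finrank_add_minDist {V : Submodule K (ι → K)} {k d : ℕ}
    (hk : finrank K V = k) (hd : ∀ v ∈ V, v ≠ 0 → d ≤ wt v) (hkd : Fintype.card ι < k + d) :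
    IsInterpolating V k := by
  classical
  intro S hS f
  obtain ⟨T, hST, -, hT⟩ := exists_subsuperset_card_eq (subset_univ S) hS
    (by simpa [← hk] using V.finrank_le)
  let r := LinearMap.funLeft K K ((↑) : T → ι) ∘ₗ V.subtype
  have hr : Function.Injective r := by
    rw [← LinearMap.ker_eq_bot, Submodule.eq_bot_iff]
    rintro ⟨v, hv⟩ hrv
    by_contra hv0
    have hvT : ∀ i ∉ Tᶜ, v i = 0 := fun i hi => congrFun hrv ⟨i, by simpa using hi⟩
    have hwt := wt_le_card_of_eq_zero_s17 hvT
    rw [card_compl, hT] at hwt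
    have := hd v hv (by simpa using hv0)
    have := card_le_univ T
    omega
  obtain ⟨v, hv⟩ := (LinearMap.injective_iff_surjective_of_finrank_eq_finrank
    (by simp [hk, hT])).mp hr (f ∘ (↑))
  exact ⟨v, v.2, fun i hi => congrFun hv ⟨i, hST hi⟩⟩

theorem IsInterpolating.le_finrank {V : Submodule K (ι → K)} {t : ℕ} (hV : IsInterpolating V t)
    (ht : t ≤ Fintype.card ι) : t ≤ finrank K V := by
  classical
  obtain ⟨S, -, hS⟩ := exists_subset_card_eq (s := univ) (by simpa using ht)
  let r := LinearMap.funLeft K K ((↑) : S → ι) ∘ₗ V.subtype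
  have hr : Function.Surjective r := fun g => by
    obtain ⟨v, hv, hvg⟩ := hV S hS.le (fun i => if h : i ∈ S then g ⟨i, h⟩ else 0)
    exact ⟨⟨v, hv⟩, funext fun j => by simpa [r] using hvg j j.2⟩
  simpa [hS] using LinearMap.finrank_le_finrank_of_surjective hr

theorem IsInterpolating.exists_wt_le {V : Submodule K (ι → K)} {t : ℕ} (hV : IsInterpolating V t)
    (ht0 : 0 < t) (ht : t ≤ Fintype.card ι) :
    ∃ v ∈ V, v ≠ 0 ∧ wt v ≤ Fintype.card ι + 1 - t := by
  classical
  obtain ⟨S, -, hS⟩ := exists_subset_card_eq (s := univ) (by simpa using ht)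
  obtain ⟨j, hj⟩ := card_pos.mp (hS ▸ ht0)
  obtain ⟨v, hv, hvS⟩ := hV S hS.le (Pi.single j 1)
  refine ⟨v, hv, fun h => by simpa [h] using hvS j hj, ?_⟩
  have : wt v ≤ #(S.erase j)ᶜ := wt_le_card_of_eq_zero_s17 fun i hi => by
    rw [notMem_compl, mem_erase] at hi
    rw [hvS i hi.2, Pi.single_eq_of_ne hi.1]
  rw [card_compl, card_erase_of_mem hj] at this
  omega

end Interpolation

section Products

variable {K : Type*} [Field K] {ι : Type*}

-- The product of interpolants for `Pi.single j 1` on two complementary parts of `T \ {j}`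
-- is the indicator of `j` on `T`.
theorem IsInterpolating.schurProd {V W : Submodule K (ι → K)} {s t : ℕ}
    (hV : IsInterpolating V s) (hW : IsInterpolating W t) (hs : 0 < s) (ht : 0 < t) :
    IsInterpolating (_root_.schurProd V W) (s + t - 1) := by
  classical
  intro T hT f
  have hsingle : ∀ j ∈ T, ∃ p ∈ _root_.schurProd V W, ∀ i ∈ T, p i = (Pi.single j 1 : ι → K) i := by
    intro j hj
    obtain ⟨SV, hSV, hSVcard⟩ := exists_subset_card_eq (min_le_right (s - 1) #(T.erase j))
    have hSWcard : #(T.erase j \ SV) ≤ t - 1 := by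
      rw [card_sdiff_of_subset hSV, hSVcard, card_erase_of_mem hj]
      omega
    obtain ⟨a, ha, haS⟩ := hV (insert j SV) ((card_insert_le _ _).trans (by omega)) (Pi.single j 1)
    obtain ⟨b, hb, hbS⟩ := hW (insert j (T.erase j \ SV)) ((card_insert_le _ _).trans (by omega))
      (Pi.single j 1)
    refine ⟨a * b, Submodule.subset_span ⟨a, ha, b, hb, rfl⟩, fun i hi => ?_⟩
    by_cases hij : i = j
    · subst hij
      simp [haS i (mem_insert_self _ _), hbS i (mem_insert_self _ _)]
    by_cases hiV : i ∈ SV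
    · simp [haS i (mem_insert_of_mem hiV), hij]
    · simp [hbS i (by simp [hi, hij, hiV]), hij]
  choose! p hp hpT using hsingle
  refine ⟨∑ j ∈ T, f j • p j, Submodule.sum_mem _ fun j hj => Submodule.smul_mem _ _ (hp j hj),
    fun i hi => ?_⟩
  simp only [Finset.sum_apply, Pi.smul_apply, smul_eq_mul]
  rw [sum_congr rfl fun j hj => by rw [hpT j hj i hi]]
  simp [Pi.single_apply, hi]

theorem IsInterpolating.extendCode {Fq : Type*} [Field Fq] [Algebra Fq K]
    {C : Submodule Fq (ι → Fq)} {t : ℕ} (hC : IsInterpolating C t) :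
    IsInterpolating (_root_.extendCode Fq K C) t := by
  classical
  intro S hS f
  choose c hc hcS using fun j : ι => hC S hS (Pi.single j 1)
  refine ⟨∑ j ∈ S, f j • fun i => algebraMap Fq K (c j i),
    Submodule.sum_mem _ fun j _ => Submodule.smul_mem _ _ (Submodule.subset_span ⟨c j, hc j, rfl⟩),
    fun i hi => ?_⟩
  simp [Finset.sum_apply, (hcS · i hi), Pi.single_apply, hi]

theorem le_dualCode_schurProd [Fintype ι] {A B D : Submodule K (ι → K)}
    (h : schurProd A B ≤ dualCode D) : B ≤ dualCode (schurProd A D) := by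
  intro b hb c hc
  induction hc using Submodule.span_induction with
  | mem x hx =>
    obtain ⟨a, ha, d, hd, rfl⟩ := hx
    rw [← h (Submodule.subset_span ⟨a, ha, b, hb, rfl⟩) d hd]
    exact sum_congr rfl fun i _ => by simp only [Pi.mul_apply]; ring
  | zero => simp
  | add x y _ _ hx hy => simp [mul_add, sum_add_distrib, hx, hy]
  | smul r x _ hx => simp [mul_left_comm _ r, ← mul_sum, hx]

end Products

theorem mds_ecp_pmds_general {Fq K : Type*} [Field Fq] [Field K] [Algebra Fq K]
    {n ℓ : ℕ} (hl : 2 ≤ ℓ) (hn : 2 * ℓ < n - 2)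
    (C : Submodule Fq (Fin n → Fq))
    (hCk : Module.finrank Fq C = n - 2 * ℓ - 1)
    (hCd : hasMinDist C (2 * ℓ + 2))
    (A B : Submodule K (Fin n → K))
    (hAB : schurProd A B ≤ dualCode (extendCode Fq K C))
    (hBperp : ∃ dB, hasMinDist (dualCode B) dB ∧ ℓ < dB)
    (hAk : Module.finrank K A = ℓ + 2)
    (hAd : hasMinDist A (n - ℓ - 1)) :
    Module.finrank K B = ℓ ∧
      hasMinDist (schurProd A B) (n - 2 * ℓ) ∧ 2 ≤ n - 2 * ℓ ∧
      n - 2 * ℓ = n - Module.finrank K A - Module.finrank K B + 2 ∧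
      schurProd A B = dualCode (extendCode Fq K C) := by
  obtain ⟨dB, hBd, hℓdB⟩ := hBperp
  set D := extendCode Fq K C
  have hD : IsInterpolating D (n - 2 * ℓ - 1) :=
    (isInterpolating_of_finrank_add_minDist hCk hCd.2 (by simp; omega)).extendCode
  have hA : IsInterpolating A (ℓ + 2) :=
    isInterpolating_of_finrank_add_minDist hAk hAd.2 (by simp; omega)
  have hB : IsInterpolating B ℓ :=
    isInterpolating_of_lt_wt_dualCode fun y hy hy0 => hℓdB.trans_le (hBd.2 y hy hy0)
  have hAB' : IsInterpolating (schurProd A B) (2 * ℓ + 1) := by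
    simpa [show ℓ + 2 + ℓ - 1 = 2 * ℓ + 1 by omega] using hA.schurProd hB (by omega) (by omega)
  have hAD : IsInterpolating (schurProd A D) (n - ℓ) := by
    simpa [show ℓ + 2 + (n - 2 * ℓ - 1) - 1 = n - ℓ by omega]
      using hA.schurProd hD (by omega) (by omega)
  have hcard : Fintype.card (Fin n) = n := Fintype.card_fin n
  have hABD : schurProd A B = dualCode D := by
    refine Submodule.eq_of_le_of_finrank_le hAB ?_
    have := finrank_dualCode_add_finrank D
    have := hD.le_finrank (by omega)
    have := hAB'.le_finrank (by omega)
    omega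
  have hBk : finrank K B = ℓ := by
    have := Submodule.finrank_mono (le_dualCode_schurProd hAB)
    have := finrank_dualCode_add_finrank (schurProd A D)
    have := hAD.le_finrank (by omega)
    have := hB.le_finrank (by omega)
    omega
  obtain ⟨v, hv, hv0, hvwt⟩ := hAB'.exists_wt_le (by omega) (by omega)
  have hwt : ∀ y ∈ schurProd A B, y ≠ 0 → n - 2 * ℓ ≤ wt y := fun y hy hy0 => by
    have := hD.lt_wt_of_mem_dualCode (hABD ▸ hy) hy0
    omega
  refine ⟨hBk, ⟨⟨v, hv, hv0, le_antisymm (by omega) (hwt v hv hv0)⟩, hwt⟩, by omega,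
    by rw [hAk, hBk]; omega, hABD⟩

/-- for an MDS code `C = [n, n-2ℓ-1, 2ℓ+2]` with an `ℓ`-error-correcting
pair `(A, B)` where `dim A = ℓ+2` and `d(A) = n-ℓ-1`: `dim B = ℓ`, the pair is PMDS
with `d(A*B) = n - dim A - dim B + 2 = n - 2ℓ`, and `A*B = C^⊥`. -/
theorem mds_ecp_pmds {Fq K : Type*} [Field Fq] [Fintype Fq] [Field K] [Algebra Fq K]
    {n ℓ : ℕ} (hl : 2 ≤ ℓ) (hn : 2 * ℓ < n - 2)
    (C : Submodule Fq (Fin n → Fq))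
    (hCk : Module.finrank Fq C = n - 2 * ℓ - 1)
    (hCd : hasMinDist C (2 * ℓ + 2))
    (A B : Submodule K (Fin n → K))
    (hAB : schurProd A B ≤ dualCode (extendCode Fq K C))
    (hBperp : ∃ dB, hasMinDist (dualCode B) dB ∧ ℓ < dB)
    (hAk : Module.finrank K A = ℓ + 2)
    (hAd : hasMinDist A (n - ℓ - 1))
    (hEd : n < (n - ℓ - 1) + (2 * ℓ + 2)) :
    Module.finrank K B = ℓ ∧
      hasMinDist (schurProd A B) (n - 2 * ℓ) ∧ 2 ≤ n - 2 * ℓ ∧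
      n - 2 * ℓ = n - Module.finrank K A - Module.finrank K B + 2 ∧
      schurProd A B = dualCode (extendCode Fq K C) :=
  mds_ecp_pmds_general hl hn C hCk hCd A B hAB hBperp hAk hAd
end
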